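/- Fix a channel coefficient h ∈ ℂ with h ≠ 0 and constants a > 0, b > 0, and set f_opt = (1 + σw²/(σx²·|h|²)) · x/‖x‖². Then f_opt minimizes the zeroth-order error probability: for every nonzero filter f ∈ ℂ^B, P0(f_opt) ≤ P0(f). -/

import Mathlib

open MeasureTheory

/-- `φ(f) = fᴴ x = Σᵢ conj(fᵢ)·xᵢ`. -/
noncomputable def phi {B : ℕ} (x f : Fin B → ℂ) : ℂ :=
  ∑ i, (starRingEnd ℂ) (f i) * x i

/-- Squared Euclidean norm `‖f‖² = Σᵢ |fᵢ|²`. -/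
noncomputable def nsq {B : ℕ} (f : Fin B → ℂ) : ℝ :=
  ∑ i, Complex.normSq (f i)

/-- Zeroth-order symbol-estimate MSE of the ZF equalizer, deterministic channel `h`. -/
noncomputable def Mdc {B : ℕ} (σx2 σw2 : ℝ) (h : ℂ) (x f : Fin B → ℂ) : ℝ :=
  (σx2 * (Complex.normSq h * Complex.normSq (phi x f - 1) + σw2 * nsq f) + σw2) /
    (Complex.normSq h * Complex.normSq (phi x f) + σw2 * nsq f)

/-- Standard Gaussian tail function `Q(u) = (1/√(2π)) ∫_u^∞ e^{−t²/2} dt`. -/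
noncomputable def Qfun (u : ℝ) : ℝ :=
  (Real.sqrt (2 * Real.pi))⁻¹ * ∫ t in Set.Ioi u, Real.exp (-t ^ 2 / 2)

/-- Zeroth-order error probability `[P_e]₀ = a·Q(b·√(σx²/M_dc(f)))`. -/
noncomputable def P0dc {B : ℕ} (a b σx2 σw2 : ℝ) (h : ℂ) (x f : Fin B → ℂ) : ℝ :=
  a * Qfun (b * Real.sqrt (σx2 / Mdc σx2 σw2 h x f))

/-- The optimal filter `f_opt = (1 + σw²/(σx²·|h|²)) · x/‖x‖²`. -/
noncomputable def fOptDc {B : ℕ} (σx2 σw2 : ℝ) (h : ℂ) (x : Fin B → ℂ) : Fin B → ℂ :=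
  fun i => ((1 + σw2 / (σx2 * Complex.normSq h) : ℝ) : ℂ) * (x i / (nsq x : ℂ))

/-!
With `t = 1 + σw²/(σx²|h|²)` and `D(f) = |h|²|φ(f)|² + σw²‖f‖²`, the MSE is
`M_dc(f) = σx² + σx²|h|² (t - 2 Re φ(f)) / D(f)`. By Cauchy–Schwarz
`D(f) ≥ (|h|² + σw²/‖x‖²) (Re φ(f))²`, with equality at `f_opt`, where `φ = t`; and
`(t - 2r)/r² ≥ -1/t` is `(t - r)² ≥ 0`. So `f_opt` minimises `M_dc`, hence `P0`, since `Q` is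
decreasing.
-/

open Complex

lemma nsq_pos {B : ℕ} {f : Fin B → ℂ} (hf : f ≠ 0) : 0 < nsq f := by
  obtain ⟨i, hi⟩ := Function.ne_iff.mp hf
  exact Finset.sum_pos' (fun j _ => normSq_nonneg _) ⟨i, Finset.mem_univ i, normSq_pos.mpr hi⟩

lemma sq_norm_toLp {B : ℕ} (f : Fin B → ℂ) : ‖WithLp.toLp 2 f‖ ^ 2 = nsq f := by
  simp [EuclideanSpace.norm_sq_eq, nsq, Complex.sq_norm]

lemma normSq_phi_le {B : ℕ} (x f : Fin B → ℂ) : normSq (phi x f) ≤ nsq f * nsq x := by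
  have hinner : phi x f = inner ℂ (WithLp.toLp 2 f) (WithLp.toLp 2 x) := by
    simp [phi, PiLp.inner_apply, mul_comm]
  rw [← Complex.sq_norm, hinner, ← sq_norm_toLp, ← sq_norm_toLp, ← mul_pow]
  exact pow_le_pow_left₀ (norm_nonneg _) (norm_inner_le_norm _ _) 2

lemma phi_real_smul_div_nsq {B : ℕ} (x : Fin B → ℂ) (hx : x ≠ 0) (t : ℝ) :
    phi x (fun i => (t : ℂ) * (x i / (nsq x : ℂ))) = t := by
  have hX : (nsq x : ℂ) ≠ 0 := ofReal_ne_zero.mpr (nsq_pos hx).ne'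
  have hsum : ∑ i, (normSq (x i) : ℂ) = nsq x := by simp [nsq]
  simp only [phi, map_mul, map_div₀, conj_ofReal]
  calc ∑ i, (t : ℂ) * (starRingEnd ℂ (x i) / nsq x) * x i
      = t / nsq x * ∑ i, (normSq (x i) : ℂ) := by
        rw [Finset.mul_sum]
        exact Finset.sum_congr rfl fun i _ => by rw [normSq_eq_conj_mul_self]; ring
    _ = t := by rw [hsum, div_mul_cancel₀ _ hX]

lemma nsq_real_smul_div_nsq {B : ℕ} (x : Fin B → ℂ) (hx : x ≠ 0) (t : ℝ) :
    nsq (fun i => (t : ℂ) * (x i / (nsq x : ℂ))) = t ^ 2 / nsq x := by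
  have hX := (nsq_pos hx).ne'
  simp only [nsq, normSq_mul, normSq_div, normSq_ofReal, ← Finset.mul_sum, ← Finset.sum_div]
  field_simp

lemma phi_fOptDc {B : ℕ} (σx2 σw2 : ℝ) (h : ℂ) {x : Fin B → ℂ} (hx : x ≠ 0) :
    phi x (fOptDc σx2 σw2 h x) = ((1 + σw2 / (σx2 * normSq h) : ℝ) : ℂ) :=
  phi_real_smul_div_nsq x hx _

lemma nsq_fOptDc {B : ℕ} (σx2 σw2 : ℝ) (h : ℂ) {x : Fin B → ℂ} (hx : x ≠ 0) :
    nsq (fOptDc σx2 σw2 h x) = (1 + σw2 / (σx2 * normSq h)) ^ 2 / nsq x :=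
  nsq_real_smul_div_nsq x hx _

lemma Mdc_eq {B : ℕ} {σx2 σw2 : ℝ} {h : ℂ} (hσx : σx2 ≠ 0) (hh : h ≠ 0) (x f : Fin B → ℂ)
    (hD : normSq h * normSq (phi x f) + σw2 * nsq f ≠ 0) :
    Mdc σx2 σw2 h x f = σx2 + σx2 * normSq h * ((1 + σw2 / (σx2 * normSq h) - 2 * (phi x f).re) /
      (normSq h * normSq (phi x f) + σw2 * nsq f)) := by
  have hc : normSq h ≠ 0 := normSq_pos.mpr hh |>.ne'
  simp only [Mdc, normSq_sub, map_one, mul_one]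
  field_simp
  ring

lemma sub_two_mul_div_le {t e r q D : ℝ} (ht : 0 < t) (he : 0 < e) (hrq : r ^ 2 ≤ q)
    (hqD : e * q ≤ D) (hD : 0 < D) :
    (t - 2 * t) / (t ^ 2 * e) ≤ (t - 2 * r) / D := by
  rw [div_le_div_iff₀ (by positivity) hD]
  nlinarith [mul_nonneg ht.le (mul_nonneg he.le (sq_nonneg (t - r))),
    mul_le_mul_of_nonneg_left hrq he.le]

lemma Mdc_pos {B : ℕ} {σx2 σw2 : ℝ} (hσx : 0 ≤ σx2) (hσw : 0 < σw2) (h : ℂ) (x : Fin B → ℂ)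
    {f : Fin B → ℂ} (hf : 0 < nsq f) : 0 < Mdc σx2 σw2 h x f := by
  have := normSq_nonneg h
  have := normSq_nonneg (phi x f)
  have := normSq_nonneg (phi x f - 1)
  unfold Mdc
  positivity

lemma Mdc_fOptDc_le {B : ℕ} {x : Fin B → ℂ} (hx : x ≠ 0) {σx2 σw2 : ℝ} (hσx : 0 < σx2)
    (hσw : 0 < σw2) {h : ℂ} (hh : h ≠ 0) {f : Fin B → ℂ} (hf : f ≠ 0) :
    Mdc σx2 σw2 h x (fOptDc σx2 σw2 h x) ≤ Mdc σx2 σw2 h x f := by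
  have hc : 0 < normSq h := normSq_pos.mpr hh
  have hX : 0 < nsq x := nsq_pos hx
  set t := 1 + σw2 / (σx2 * normSq h)
  have ht : 0 < t := by positivity
  have hopt : Mdc σx2 σw2 h x (fOptDc σx2 σw2 h x) = σx2 + σx2 * normSq h *
      ((t - 2 * t) / (t ^ 2 * (normSq h + σw2 / nsq x))) := by
    rw [Mdc_eq hσx.ne' hh, phi_fOptDc _ _ _ hx, nsq_fOptDc _ _ _ hx, ofReal_re, normSq_ofReal]
    · ring
    · rw [phi_fOptDc _ _ _ hx, nsq_fOptDc _ _ _ hx, normSq_ofReal]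
      positivity
  have hDf : 0 < normSq h * normSq (phi x f) + σw2 * nsq f := by
    have := nsq_pos hf
    have := normSq_nonneg (phi x f)
    positivity
  rw [hopt, Mdc_eq hσx.ne' hh x f hDf.ne']
  gcongr σx2 + _ * ?_
  refine sub_two_mul_div_le ht (by positivity) ((sq _).trans_le (re_sq_le_normSq _)) ?_ hDf
  rw [add_mul, div_mul_eq_mul_div, mul_div_assoc]
  gcongr _ + σw2 * ?_
  exact (div_le_iff₀ hX).mpr (normSq_phi_le x f)

lemma Qfun_antitone : Antitone Qfun := by
  intro u v huv
  have hint : Integrable (fun t : ℝ => Real.exp (-t ^ 2 / 2)) := by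
    simpa [neg_div, div_eq_inv_mul] using integrable_exp_neg_mul_sq (b := 1 / 2) (by norm_num)
  unfold Qfun
  gcongr ?_ * ?_
  exact setIntegral_mono_set hint.integrableOn (.of_forall fun t => (Real.exp_pos _).le)
    (Set.Ioi_subset_Ioi huv).eventuallyLE

lemma P0dc_le_of_Mdc_le {B : ℕ} {a b σx2 σw2 : ℝ} {h : ℂ} {x f g : Fin B → ℂ} (ha : 0 ≤ a)
    (hb : 0 ≤ b) (hσx : 0 ≤ σx2) (hf : 0 < Mdc σx2 σw2 h x f)
    (hfg : Mdc σx2 σw2 h x f ≤ Mdc σx2 σw2 h x g) :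
    P0dc a b σx2 σw2 h x f ≤ P0dc a b σx2 σw2 h x g := by
  unfold P0dc
  gcongr a * ?_
  exact Qfun_antitone (by gcongr)

theorem fopt_optimal_zeroth_order_pe_general
    (B : ℕ) (x : Fin B → ℂ) (hx : x ≠ 0)
    (σx2 σw2 : ℝ) (hσx : 0 < σx2) (hσw : 0 < σw2)
    (h : ℂ) (hh : h ≠ 0) (a b : ℝ) (ha : 0 < a) (hb : 0 < b) :
    ∀ f : Fin B → ℂ, f ≠ 0 →
      P0dc a b σx2 σw2 h x (fOptDc σx2 σw2 h x) ≤ P0dc a b σx2 σw2 h x f := by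
  intro f hf
  have hc := normSq_pos.mpr hh
  have hX := nsq_pos hx
  have hopt : 0 < Mdc σx2 σw2 h x (fOptDc σx2 σw2 h x) :=
    Mdc_pos hσx.le hσw h x (by rw [nsq_fOptDc _ _ _ hx]; positivity)
  exact P0dc_le_of_Mdc_le ha.le hb.le hσx.le hopt (Mdc_fOptDc_le hx hσx hσw hh hf)

/-- `f_opt = (1 + σw²/(σx²·|h|²)) · x/‖x‖²` minimizes the zeroth-order error
probability `[P_e]₀`. -/
theorem fopt_optimal_zeroth_order_pe
    (B : ℕ) (hB : 1 ≤ B) (x : Fin B → ℂ) (hx : x ≠ 0)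
    (σx2 σw2 : ℝ) (hσx : 0 < σx2) (hσw : 0 < σw2)
    (h : ℂ) (hh : h ≠ 0) (a b : ℝ) (ha : 0 < a) (hb : 0 < b) :
    ∀ f : Fin B → ℂ, f ≠ 0 →
      P0dc a b σx2 σw2 h x (fOptDc σx2 σw2 h x) ≤ P0dc a b σx2 σw2 h x f :=
  fopt_optimal_zeroth_order_pe_general B x hx σx2 σw2 hσx hσw h hh a b ha hb
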